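/- Let G̃ be obtained by the Laplacian construction from (G, v_c), with Laplacian matrix L̃, and write v_c^1 = (v_c,1), v_c^2 = (v_c,2). Then for every natural number k and all vertices v, w ∈ V(G) lying in the same orbit under Aut(G, v_c), the (v,1)-entry of L̃^k(e_{v_c^1} + e_{v_c^2}) equals its (w,1)-entry. -/
import Mathlib


open SimpleGraph Matrix

/-- `v` and `w` lie in the same orbit under the automorphisms of `G` fixing `vc`. -/
def SameOrbit {V : Type*} (G : SimpleGraph V) (vc v w : V) : Prop :=
  ∃ φ : G ≃g G, φ vc = vc ∧ φ v = w

/-- `Gt` is obtained from `(G, vc)` by the Laplacian construction: the vertex set is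
`V × Fin 2`, each copy of `G` is induced, and every edge between the two copies joins
vertices lying in the same orbit under `Aut(G, vc)`. -/
def IsLapConstruction {V : Type*} (G : SimpleGraph V) (vc : V)
    (Gt : SimpleGraph (V × Fin 2)) : Prop :=
  (∀ i : Fin 2, ∀ v w : V, Gt.Adj (v, i) (w, i) ↔ G.Adj v w) ∧
  (∀ v w : V, Gt.Adj (v, 0) (w, 1) → SameOrbit G vc v w)

lemma sameOrbit_symm {V : Type*} {G : SimpleGraph V} {vc v w : V}
    (h : SameOrbit G vc v w) : SameOrbit G vc w v := by
  obtain ⟨φ, h1, h2⟩ := h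
  exact ⟨φ.symm, φ.toEquiv.symm_apply_eq.mpr h1.symm, φ.toEquiv.symm_apply_eq.mpr h2.symm⟩

lemma lap_entry {α : Type*} [Fintype α] [DecidableEq α] (H : SimpleGraph α)
    [DecidableRel H.Adj] (f : α → ℝ) (a : α) :
    (H.lapMatrix ℝ *ᵥ f) a = ∑ b, if H.Adj a b then f a - f b else 0 := by
  rw [lapMatrix_mulVec_apply, ← Finset.sum_filter, ← neighborFinset_eq_filter,
    Finset.sum_sub_distrib, Finset.sum_const, degree, nsmul_eq_mul]

lemma step {V : Type*} [Fintype V] [DecidableEq V]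
    (G : SimpleGraph V) (vc : V)
    (Gt : SimpleGraph (V × Fin 2)) [DecidableRel Gt.Adj]
    (hC : IsLapConstruction G vc Gt) (f : V × Fin 2 → ℝ)
    (hf : ∀ v w (i j : Fin 2), SameOrbit G vc v w → f (v, i) = f (w, j)) :
    ∀ v w (i j : Fin 2), SameOrbit G vc v w →
      (Gt.lapMatrix ℝ *ᵥ f) (v, i) = (Gt.lapMatrix ℝ *ᵥ f) (w, j) := by
  classical
  -- reduce each entry to a same-copy sum
  have key : ∀ (v : V) (i : Fin 2),
      (Gt.lapMatrix ℝ *ᵥ f) (v, i)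
        = ∑ u : V, if G.Adj v u then f (v, i) - f (u, i) else 0 := by
    intro v i
    rw [lap_entry, Fintype.sum_prod_type]
    refine Finset.sum_congr rfl fun u _ => ?_
    have cross : ∀ l : Fin 2, l ≠ i →
        (if Gt.Adj (v, i) (u, l) then f (v, i) - f (u, l) else 0) = 0 := by
      intro l hl
      split_ifs with h
      · have hso : SameOrbit G vc v u := by
          fin_cases i <;> fin_cases l <;>
            first
              | exact absurd rfl hl
              | exact hC.2 v u h
              | exact sameOrbit_symm (hC.2 u v h.symm)
        rw [hf v u i l hso, sub_self]
      · rfl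
    rw [Finset.sum_eq_single_of_mem i (Finset.mem_univ i) (fun l _ hl => cross l hl)]
    simp only [hC.1 i v u]
  intro v w i j hvw
  obtain ⟨φ, h1, h2⟩ := hvw
  rw [key, key]
  rw [← Equiv.sum_comp φ.toEquiv (fun u => if G.Adj w u then f (w, j) - f (u, j) else 0)]
  refine Finset.sum_congr rfl fun u _ => ?_
  have hadj : G.Adj w (φ.toEquiv u) ↔ G.Adj v u := by
    rw [← h2]; exact φ.map_adj_iff
  by_cases h : G.Adj v u
  · rw [if_pos h, if_pos (hadj.mpr h)]
    rw [hf v w i j ⟨φ, h1, h2⟩, hf u (φ u) i j ⟨φ, h1, rfl⟩]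
    rfl
  · rw [if_neg h, if_neg (fun hh => h (hadj.mp hh))]

theorem lapConstruction_constant_on_orbits {V : Type*} [Fintype V] [DecidableEq V]
    (G : SimpleGraph V) (vc : V)
    (Gt : SimpleGraph (V × Fin 2)) [DecidableRel Gt.Adj]
    (hC : IsLapConstruction G vc Gt) (k : ℕ) (v w : V) (hvw : SameOrbit G vc v w) :
    ((Gt.lapMatrix ℝ ^ k) *ᵥ (Pi.single (vc, 0) 1 + Pi.single (vc, 1) 1)) (v, 0) =
      ((Gt.lapMatrix ℝ ^ k) *ᵥ (Pi.single (vc, 0) 1 + Pi.single (vc, 1) 1)) (w, 0) := by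
  set x : V × Fin 2 → ℝ := Pi.single (vc, 0) 1 + Pi.single (vc, 1) 1 with hx
  suffices H : ∀ v w (i j : Fin 2), SameOrbit G vc v w →
      ((Gt.lapMatrix ℝ ^ k) *ᵥ x) (v, i) = ((Gt.lapMatrix ℝ ^ k) *ᵥ x) (w, j) from
    H v w 0 0 hvw
  induction k with
  | zero =>
    intro v w i j h
    obtain ⟨φ, h1, h2⟩ := h
    have hvc : v = vc ↔ w = vc := by
      constructor
      · rintro rfl; rw [← h2]; exact h1
      · rintro rfl; exact φ.injective (h2.trans h1.symm)
    have eval : ∀ (u : V) (l : Fin 2), x (u, l) = if u = vc then 1 else 0 := by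
      intro u l
      fin_cases l <;>
        simp [hx, Pi.single_apply, Prod.ext_iff]
    simp only [pow_zero, one_mulVec, eval]
    by_cases h : v = vc
    · rw [if_pos h, if_pos (hvc.mp h)]
    · rw [if_neg h, if_neg (fun hh => h (hvc.mpr hh))]
  | succ n ih =>
    intro v w i j h
    have : Gt.lapMatrix ℝ ^ (n + 1) = Gt.lapMatrix ℝ * Gt.lapMatrix ℝ ^ n := by
      rw [pow_succ']
    rw [this, ← mulVec_mulVec]
    exact step G vc Gt hC _ ih v w i j h
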